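/- arXiv:2107.09449 — 5 statements merged into one kernel-verified Lean document; each statement's English description precedes it below -/
import Mathlib

section
/- If k = k₁ + k₂ + ... + k_s with s ≥ 2 and all kᵢ > 0, then every uniform k-palette can be written as a coordinatewise sum of s triples, where the i-th triple is a uniform kᵢ-palette. -/
def UniformPalette (k : ℕ) (p : ℕ × ℕ × ℕ) : Prop :=
  p.1 + p.2.1 + p.2.2 = k ∧
  p.1 ≤ (k + 1) / 2 ∧ p.2.1 ≤ (k + 1) / 2 ∧ p.2.2 ≤ (k + 1) / 2

lemma interval3 (k L1 L2 L3 U1 U2 U3 : ℕ) (h1 : L1 ≤ U1) (h2 : L2 ≤ U2) (h3 : L3 ≤ U3)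
    (hL : L1 + L2 + L3 ≤ k) (hU : k ≤ U1 + U2 + U3) :
    ∃ q1 q2 q3 : ℕ, q1 + q2 + q3 = k ∧ L1 ≤ q1 ∧ q1 ≤ U1 ∧ L2 ≤ q2 ∧ q2 ≤ U2 ∧
      L3 ≤ q3 ∧ q3 ≤ U3 := by
  refine ⟨min U1 (max L1 (k - L2 - L3)),
    min U2 (max L2 (k - min U1 (max L1 (k - L2 - L3)) - L3)), ?_, ?_, ?_, ?_, ?_, ?_, ?_, ?_⟩
  · exact k - min U1 (max L1 (k - L2 - L3)) - min U2 (max L2 (k - min U1 (max L1 (k - L2 - L3)) - L3))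
  all_goals omega

lemma split2 (k₁ k₂ : ℕ) (p : ℕ × ℕ × ℕ) (hp : UniformPalette (k₁ + k₂) p) :
    ∃ q r : ℕ × ℕ × ℕ, UniformPalette k₁ q ∧ UniformPalette k₂ r ∧
      p.1 = q.1 + r.1 ∧ p.2.1 = q.2.1 + r.2.1 ∧ p.2.2 = q.2.2 + r.2.2 := by
  obtain ⟨a, b, c⟩ := p
  obtain ⟨h1, h2, h3, h4⟩ := hp
  simp only [UniformPalette] at *
  set m1 := (k₁ + 1) / 2 with hm1
  set m2 := (k₂ + 1) / 2 with hm2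
  set mk := (k₁ + k₂ + 1) / 2 with hmk
  have hc1 : 2 * m1 ≤ k₁ + 1 ∧ k₁ + 1 ≤ 2 * m1 + 1 := by omega
  have hc2 : 2 * m2 ≤ k₂ + 1 ∧ k₂ + 1 ≤ 2 * m2 + 1 := by omega
  have hck : 2 * mk ≤ k₁ + k₂ + 1 ∧ k₁ + k₂ + 1 ≤ 2 * mk + 1 := by omega
  clear_value m1 m2 mk
  clear hm1 hm2 hmk
  have e1 : a - m2 ≤ min a m1 := by omega
  have e2 : b - m2 ≤ min b m1 := by omega
  have e3 : c - m2 ≤ min c m1 := by omega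
  have eL : (a - m2) + (b - m2) + (c - m2) ≤ k₁ := by omega
  have eU : k₁ ≤ min a m1 + min b m1 + min c m1 := by omega
  obtain ⟨qa, qb, qc, hsum, hLa, hUa, hLb, hUb, hLc, hUc⟩ :=
    interval3 k₁ (a - m2) (b - m2) (c - m2) (min a m1) (min b m1) (min c m1) e1 e2 e3 eL eU
  have fa : qa ≤ a ∧ qa ≤ m1 := by omega
  have fb : qb ≤ b ∧ qb ≤ m1 := by omega
  have fc : qc ≤ c ∧ qc ≤ m1 := by omega
  clear e1 e2 e3 eL eU hUa hUb hUc hc1 hc2 hck h2 h3 h4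
  refine ⟨(qa, qb, qc), (a - qa, b - qb, c - qc),
    ⟨?_, ?_, ?_, ?_⟩, ⟨?_, ?_, ?_, ?_⟩, ?_, ?_, ?_⟩ <;> dsimp only <;> omega

lemma auxdec : ∀ (s : ℕ) (ki : Fin (s + 1) → ℕ) (k : ℕ), k = ∑ i, ki i →
    ∀ p : ℕ × ℕ × ℕ, UniformPalette k p →
    ∃ f : Fin (s + 1) → ℕ × ℕ × ℕ,
      (∀ i, UniformPalette (ki i) (f i)) ∧
      p.1 = ∑ i, (f i).1 ∧ p.2.1 = ∑ i, (f i).2.1 ∧ p.2.2 = ∑ i, (f i).2.2 := by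
  intro s
  induction s with
  | zero =>
    intro ki k hk p hp
    refine ⟨fun _ => p, fun i => ?_, by simp, by simp, by simp⟩
    have : ki i = k := by
      rw [hk, Fin.sum_univ_one]
      congr 1
      omega
    rwa [this]
  | succ s ih =>
    intro ki k hk p hp
    rw [Fin.sum_univ_castSucc] at hk
    obtain ⟨q, r, hq, hr, e1, e2, e3⟩ :=
      split2 (∑ i : Fin (s + 1), ki i.castSucc) (ki (Fin.last (s + 1))) p (hk ▸ hp)
    obtain ⟨g, hg, f1, f2, f3⟩ := ih (fun i => ki i.castSucc) _ rfl q hq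
    refine ⟨Fin.snoc g r, fun i => ?_, ?_, ?_, ?_⟩
    · refine Fin.lastCases ?_ (fun j => ?_) i
      · simpa using hr
      · simpa using hg j
    all_goals
      rw [Fin.sum_univ_castSucc]
      simp only [Fin.snoc_castSucc, Fin.snoc_last]
      omega

theorem stmt_5 (s : ℕ) (hs : 2 ≤ s) (ki : Fin s → ℕ) (hki : ∀ i, 0 < ki i)
    (k : ℕ) (hk : k = ∑ i, ki i) (p : ℕ × ℕ × ℕ) (hp : UniformPalette k p) :
    ∃ f : Fin s → ℕ × ℕ × ℕ,
      (∀ i, UniformPalette (ki i) (f i)) ∧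
      p.1 = ∑ i, (f i).1 ∧ p.2.1 = ∑ i, (f i).2.1 ∧ p.2.2 = ∑ i, (f i).2.2 := by
  obtain ⟨n, rfl⟩ : ∃ n, s = n + 1 := ⟨s - 1, by omega⟩
  exact auxdec n ki k hk p hp
end

section
/- Let k = k₁ + k₂ + ... + k_s with k, s > 0 and all kᵢ > 0. Then the number of sequences (p₁,...,p_s), where each pᵢ is a uniform kᵢ-palette, is at least k+1. -/
/-- The finset of uniform k-palettes: triples (a,b,c) with a+b+c = k and
each entry at most ⌈k/2⌉. -/
def uniformPalettes (k : ℕ) : Finset (ℕ × ℕ × ℕ) :=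
  (Finset.range (k + 1) ×ˢ Finset.range (k + 1) ×ˢ Finset.range (k + 1)).filter
    (fun p => p.1 + p.2.1 + p.2.2 = k ∧
      p.1 ≤ (k + 1) / 2 ∧ p.2.1 ≤ (k + 1) / 2 ∧ p.2.2 ≤ (k + 1) / 2)

lemma uniformPalettes_card (k : ℕ) : k + 1 ≤ (uniformPalettes k).card := by
  have := Finset.card_le_card_of_injOn
    (f := fun j => (min j ((k+1)/2), min (k-j) ((k+1)/2),
      k - min j ((k+1)/2) - min (k-j) ((k+1)/2)))
    (s := Finset.range (k+1)) (t := uniformPalettes k)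
    (by
      intro j hj
      simp only [Finset.mem_coe, Finset.mem_range] at hj
      simp only [uniformPalettes, Finset.mem_coe, Finset.mem_filter, Finset.mem_product, Finset.mem_range]
      omega)
    (by
      intro i hi j hj h
      simp only [Finset.mem_coe, Finset.mem_range] at hi hj
      simp only [Prod.mk.injEq] at h
      omega)
  simpa using this

lemma prod_ge_sum' {α : Type*} (S : Finset α) (hne : S.Nonempty) (f g : α → ℕ)
    (h : ∀ i, f i + 1 ≤ g i) : (∑ i ∈ S, f i) + 1 ≤ ∏ i ∈ S, g i := by
  induction hne using Finset.Nonempty.cons_induction with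
  | singleton a => simpa using h a
  | cons a S ha hS ih =>
    rw [Finset.sum_cons, Finset.prod_cons]
    have h1 : (∑ i ∈ S, f i) + 1 ≤ ∏ i ∈ S, g i := ih
    have h2 : f a + 1 ≤ g a := h a
    have hx : ∑ i ∈ S, f i ≤ (f a + 1) * (∑ i ∈ S, f i) :=
      Nat.le_mul_of_pos_left _ (Nat.succ_pos _)
    have hy : (f a + 1) * ((∑ i ∈ S, f i) + 1) ≤ g a * ∏ i ∈ S, g i :=
      Nat.mul_le_mul h2 h1
    rw [mul_add, mul_one] at hy
    omega

lemma prod_ge_sum {n : ℕ} (hn : 0 < n) (f g : Fin n → ℕ)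
    (h : ∀ i, f i + 1 ≤ g i) : (∑ i, f i) + 1 ≤ ∏ i, g i := by
  have := Fin.pos_iff_nonempty.mp hn
  exact prod_ge_sum' Finset.univ Finset.univ_nonempty f g h

theorem stmt_6 (s : ℕ) (hs : 0 < s) (ki : Fin s → ℕ) (hki : ∀ i, 0 < ki i)
    (k : ℕ) (hk : k = ∑ i, ki i) (hkpos : 0 < k) :
    k + 1 ≤ (Fintype.piFinset (fun i => uniformPalettes (ki i))).card := by
  rw [Fintype.card_piFinset, hk]
  exact prod_ge_sum hs ki _ (fun i => uniformPalettes_card (ki i))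
end

section
/- For every n ≥ 6, the complete graph K_n admits an edge-coloring with 2 colors such that the only color-preserving automorphism of K_n is the identity. -/
/-- The asymmetric "color 1" graph: the path 0-1-...-(n-1) together with a chord {1,3}. -/
def nbr {n : ℕ} (u v : Fin n) : Prop :=
  u.val + 1 = v.val ∨ v.val + 1 = u.val ∨ (u.val = 1 ∧ v.val = 3) ∨ (u.val = 3 ∧ v.val = 1)

instance {n : ℕ} (u v : Fin n) : Decidable (nbr u v) := by unfold nbr; infer_instance

lemma nbr_symm {n : ℕ} {u v : Fin n} (h : nbr u v) : nbr v u := by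
  unfold nbr at *; tauto

lemma nbr_irrefl {n : ℕ} (u : Fin n) : ¬ nbr u u := by
  unfold nbr; omega

/-- The 2-coloring. -/
def phi {n : ℕ} : Sym2 (Fin n) → Fin 2 :=
  Sym2.lift ⟨fun u v => if nbr u v then 1 else 0, by
    intro u v
    show (if nbr u v then (1 : Fin 2) else 0) = if nbr v u then 1 else 0
    by_cases h : nbr u v
    · rw [if_pos h, if_pos (nbr_symm h)]
    · rw [if_neg h, if_neg (fun h' => h (nbr_symm h'))]⟩

lemma phi_mk {n : ℕ} (u v : Fin n) : phi s(u, v) = if nbr u v then 1 else 0 := rfl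

theorem stmt_8 (n : ℕ) (hn : 6 ≤ n) :
    ∃ φ : Sym2 (Fin n) → Fin 2,
      ∀ σ : (⊤ : SimpleGraph (Fin n)) ≃g (⊤ : SimpleGraph (Fin n)),
        (∀ u v : Fin n, u ≠ v → φ s(σ u, σ v) = φ s(u, v)) → ∀ x, σ x = x := by
  refine ⟨phi, ?_⟩
  intro σ h
  have hinj : Function.Injective σ := σ.injective
  -- the color-preservation becomes an iff on `nbr`
  have hok : ∀ u v : Fin n, nbr (σ u) (σ v) ↔ nbr u v := by
    intro u v
    by_cases huv : u = v
    · subst huv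
      simp [nbr_irrefl]
    · have h' := h u v huv
      rw [phi_mk, phi_mk] at h'
      by_cases h1 : nbr (σ u) (σ v) <;> by_cases h2 : nbr u v <;>
        simp [h1, h2] at h' ⊢
  have hok' : ∀ x y : Fin n, nbr (σ.symm x) (σ.symm y) ↔ nbr x y := by
    intro x y
    have := hok (σ.symm x) (σ.symm y)
    rw [RelIso.apply_symm_apply, RelIso.apply_symm_apply] at this
    exact this.symm
  -- fixed small vertices
  have h0n : (0 : ℕ) < n := by omega
  have h1n : (1 : ℕ) < n := by omega
  have h2n : (2 : ℕ) < n := by omega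
  have h3n : (3 : ℕ) < n := by omega
  have h4n : (4 : ℕ) < n := by omega
  have h5n : (5 : ℕ) < n := by omega
  set v0 : Fin n := ⟨0, h0n⟩ with hv0
  set v1 : Fin n := ⟨1, h1n⟩ with hv1
  set v2 : Fin n := ⟨2, h2n⟩ with hv2
  set v3 : Fin n := ⟨3, h3n⟩ with hv3
  set v4 : Fin n := ⟨4, h4n⟩ with hv4
  set v5 : Fin n := ⟨5, h5n⟩ with hv5
  -- basic adjacency facts
  have n01 : nbr v0 v1 := by unfold nbr; left; rfl
  have n12 : nbr v1 v2 := by unfold nbr; left; rfl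
  have n23 : nbr v2 v3 := by unfold nbr; left; rfl
  have n13 : nbr v1 v3 := by unfold nbr; right; right; left; exact ⟨rfl, rfl⟩
  have n34 : nbr v3 v4 := by unfold nbr; left; rfl
  have n45 : nbr v4 v5 := by unfold nbr; left; rfl
  -- neighborhood lemmas
  have L0 : ∀ x : Fin n, nbr v0 x → x.val = 1 := by
    intro x hx; unfold nbr at hx; simp only [hv0] at hx; omega
  have L1 : ∀ x : Fin n, nbr v1 x → x.val = 0 ∨ x.val = 2 ∨ x.val = 3 := by
    intro x hx; unfold nbr at hx; simp only [hv1] at hx; omega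
  have L2 : ∀ x : Fin n, nbr v2 x → x.val = 1 ∨ x.val = 3 := by
    intro x hx; unfold nbr at hx; simp only [hv2] at hx; omega
  have L3 : ∀ x : Fin n, nbr v3 x → x.val = 1 ∨ x.val = 2 ∨ x.val = 4 := by
    intro x hx; unfold nbr at hx; simp only [hv3] at hx; omega
  have Lk : ∀ (k : ℕ) (hk : k < n), 4 ≤ k → ∀ x : Fin n,
      nbr (⟨k, hk⟩ : Fin n) x → x.val + 1 = k ∨ x.val = k + 1 := by
    intro k hk hk4 x hx; unfold nbr at hx; simp only at hx; omega
  -- the unique triangle is {1,2,3}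
  have tri : ∀ x y z : Fin n, x ≠ y → y ≠ z → x ≠ z →
      nbr x y → nbr y z → nbr x z → (x.val = 1 ∨ x.val = 2 ∨ x.val = 3) := by
    intro x y z hxy hyz hxz nxy nyz nxz
    have d1 : x.val ≠ y.val := fun hh => hxy (Fin.ext hh)
    have d2 : y.val ≠ z.val := fun hh => hyz (Fin.ext hh)
    have d3 : x.val ≠ z.val := fun hh => hxz (Fin.ext hh)
    unfold nbr at nxy nyz nxz
    omega
  -- distinctness facts
  have d12 : v1 ≠ v2 := by simp [hv1, hv2, Fin.ext_iff]
  have d23 : v2 ≠ v3 := by simp [hv2, hv3, Fin.ext_iff]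
  have d13 : v1 ≠ v3 := by simp [hv1, hv3, Fin.ext_iff]
  have s12 : σ v1 ≠ σ v2 := fun hh => d12 (hinj hh)
  have s23 : σ v2 ≠ σ v3 := fun hh => d23 (hinj hh)
  have s13 : σ v1 ≠ σ v3 := fun hh => d13 (hinj hh)
  -- σ maps the triangle {1,2,3} into itself (valwise)
  have t1 : (σ v1).val = 1 ∨ (σ v1).val = 2 ∨ (σ v1).val = 3 :=
    tri (σ v1) (σ v2) (σ v3) s12 s23 s13
      ((hok v1 v2).2 n12) ((hok v2 v3).2 n23) ((hok v1 v3).2 n13)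
  have t2 : (σ v2).val = 1 ∨ (σ v2).val = 2 ∨ (σ v2).val = 3 :=
    tri (σ v2) (σ v1) (σ v3) s12.symm s13 s23
      ((hok v2 v1).2 (nbr_symm n12)) ((hok v1 v3).2 n13) ((hok v2 v3).2 n23)
  have t3 : (σ v3).val = 1 ∨ (σ v3).val = 2 ∨ (σ v3).val = 3 :=
    tri (σ v3) (σ v1) (σ v2) s13.symm s12 s23.symm
      ((hok v3 v1).2 (nbr_symm n13)) ((hok v1 v2).2 n12) ((hok v3 v2).2 (nbr_symm n23))
  -- σ v2 = v2
  have s2 : σ v2 = v2 := by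
    rcases t2 with h2 | h2 | h2
    · -- σ v2 = v1 : then σ⁻¹ v0 would be a neighbor of v2, i.e. in {v1, v3},
      -- so v0 ∈ σ {v1, v3} ⊆ triangle, contradiction.
      exfalso
      have hs2 : σ v2 = v1 := Fin.ext h2
      have hsym : σ.symm v1 = v2 := by
        rw [← hs2, RelIso.symm_apply_apply]
      have hw : nbr (σ.symm v0) (σ.symm v1) := (hok' v0 v1).2 n01
      rw [hsym] at hw
      have := L2 (σ.symm v0) (nbr_symm hw)
      rcases this with hw1 | hw3
      · have : σ.symm v0 = v1 := Fin.ext hw1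
        have : v0 = σ v1 := by rw [← this, RelIso.apply_symm_apply]
        have : (σ v1).val = 0 := by rw [← this]
        omega
      · have : σ.symm v0 = v3 := Fin.ext hw3
        have : v0 = σ v3 := by rw [← this, RelIso.apply_symm_apply]
        have : (σ v3).val = 0 := by rw [← this]
        omega
    · exact Fin.ext h2
    · -- σ v2 = v3 : then σ⁻¹ v4 is a neighbor of v2, contradiction as above
      exfalso
      have hs2 : σ v2 = v3 := Fin.ext h2
      have hsym : σ.symm v3 = v2 := by
        rw [← hs2, RelIso.symm_apply_apply]
      have hw : nbr (σ.symm v3) (σ.symm v4) := (hok' v3 v4).2 n34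
      rw [hsym] at hw
      have := L2 (σ.symm v4) hw
      rcases this with hw1 | hw3
      · have : σ.symm v4 = v1 := Fin.ext hw1
        have : v4 = σ v1 := by rw [← this, RelIso.apply_symm_apply]
        have : (σ v1).val = 4 := by rw [← this]
        omega
      · have : σ.symm v4 = v3 := Fin.ext hw3
        have : v4 = σ v3 := by rw [← this, RelIso.apply_symm_apply]
        have : (σ v3).val = 4 := by rw [← this]
        omega
  -- σ v1 = v1 and σ v3 = v3
  have s1 : σ v1 = v1 := by
    have hval2 : (σ v2).val = 2 := by rw [s2]
    rcases t1 with h1 | h1 | h1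
    · exact Fin.ext h1
    · exact absurd (hinj (Fin.ext (h1.trans hval2.symm) : σ v1 = σ v2)) d12
    · -- σ v1 = v3 : derive contradiction
      exfalso
      have hs1 : σ v1 = v3 := Fin.ext h1
      have hs3 : σ v3 = v1 := by
        rcases t3 with h3 | h3 | h3
        · exact Fin.ext h3
        · exact absurd (hinj (Fin.ext (h3.trans hval2.symm) : σ v3 = σ v2)) d23.symm
        · exact absurd (hinj (Fin.ext (h3.trans h1.symm) : σ v3 = σ v1)) d13.symm
      -- σ v0 is a neighbor of v3 distinct from σ v1, σ v2, σ v3, so σ v0 = v4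
      have hn0 : nbr (σ v0) (σ v1) := (hok v0 v1).2 n01
      rw [hs1] at hn0
      have h0mem := L3 (σ v0) (nbr_symm hn0)
      have e01 : σ v0 ≠ σ v1 := fun hh => by
        have := hinj hh; simp [hv0, hv1, Fin.ext_iff] at this
      have e02 : σ v0 ≠ σ v2 := fun hh => by
        have := hinj hh; simp [hv0, hv2, Fin.ext_iff] at this
      have e03 : σ v0 ≠ σ v3 := fun hh => by
        have := hinj hh; simp [hv0, hv3, Fin.ext_iff] at this
      have hv01 : (σ v0).val ≠ 1 := by
        intro hh; exact e03 (by rw [hs3]; exact Fin.ext hh)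
      have hv02 : (σ v0).val ≠ 2 := by
        intro hh; exact e02 (by rw [s2]; exact Fin.ext hh)
      have h04 : σ v0 = v4 := by
        rcases h0mem with hh | hh | hh
        · exact absurd hh hv01
        · exact absurd hh hv02
        · exact Fin.ext hh
      -- now σ⁻¹ v5 is a neighbor of v0, so σ⁻¹ v5 = v1, so v5 = σ v1 = v3 : absurd
      have hsym4 : σ.symm v4 = v0 := by rw [← h04, RelIso.symm_apply_apply]
      have hw : nbr (σ.symm v4) (σ.symm v5) := (hok' v4 v5).2 n45
      rw [hsym4] at hw
      have := L0 (σ.symm v5) hw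
      have : σ.symm v5 = v1 := Fin.ext this
      have : v5 = σ v1 := by rw [← this, RelIso.apply_symm_apply]
      rw [hs1] at this
      simp [hv5, hv3, Fin.ext_iff] at this
  have s3 : σ v3 = v3 := by
    have hval1 : (σ v1).val = 1 := by rw [s1]
    have hval2 : (σ v2).val = 2 := by rw [s2]
    rcases t3 with h3 | h3 | h3
    · exact absurd (hinj (Fin.ext (h3.trans hval1.symm) : σ v3 = σ v1)) d13.symm
    · exact absurd (hinj (Fin.ext (h3.trans hval2.symm) : σ v3 = σ v2)) d23.symm
    · exact Fin.ext h3
  -- σ v0 = v0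
  have s0 : σ v0 = v0 := by
    have hn0 : nbr (σ v0) (σ v1) := (hok v0 v1).2 n01
    rw [s1] at hn0
    have hmem := L1 (σ v0) (nbr_symm hn0)
    rcases hmem with hh | hh | hh
    · exact Fin.ext hh
    · exfalso
      have : σ v0 = σ v2 := by rw [s2]; exact Fin.ext hh
      have := hinj this; simp [hv0, hv2, Fin.ext_iff] at this
    · exfalso
      have : σ v0 = σ v3 := by rw [s3]; exact Fin.ext hh
      have := hinj this; simp [hv0, hv3, Fin.ext_iff] at this
  -- σ v4 = v4
  have s4 : σ v4 = v4 := by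
    have hn4 : nbr (σ v3) (σ v4) := (hok v3 v4).2 n34
    rw [s3] at hn4
    have hmem := L3 (σ v4) hn4
    rcases hmem with hh | hh | hh
    · exfalso
      have : σ v4 = σ v1 := by rw [s1]; exact Fin.ext hh
      have := hinj this; simp [hv4, hv1, Fin.ext_iff] at this
    · exfalso
      have : σ v4 = σ v2 := by rw [s2]; exact Fin.ext hh
      have := hinj this; simp [hv4, hv2, Fin.ext_iff] at this
    · exact Fin.ext hh
  -- main induction
  have main : ∀ k : ℕ, ∀ hkn : k < n, σ ⟨k, hkn⟩ = ⟨k, hkn⟩ := by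
    intro k
    induction k using Nat.strong_induction_on with
    | _ k IH =>
      intro hkn
      match k, hkn with
      | 0, hkn => exact s0
      | 1, hkn => exact s1
      | 2, hkn => exact s2
      | 3, hkn => exact s3
      | 4, hkn => exact s4
      | (m+5), hkn =>
        have hk1 : m + 4 < n := by omega
        have hk2 : m + 3 < n := by omega
        have ih1 : σ ⟨m + 4, hk1⟩ = ⟨m + 4, hk1⟩ := IH (m + 4) (by omega) hk1
        have ih2 : σ ⟨m + 3, hk2⟩ = ⟨m + 3, hk2⟩ := IH (m + 3) (by omega) hk2
        have hadj : nbr (⟨m + 4, hk1⟩ : Fin n) ⟨m + 5, hkn⟩ := by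
          unfold nbr; left; rfl
        have hn' : nbr (σ ⟨m + 4, hk1⟩) (σ ⟨m + 5, hkn⟩) :=
          (hok ⟨m + 4, hk1⟩ ⟨m + 5, hkn⟩).2 hadj
        rw [ih1] at hn'
        have hmem := Lk (m + 4) hk1 (by omega) (σ ⟨m + 5, hkn⟩) hn'
        rcases hmem with hh | hh
        · exfalso
          have hh2 : (σ (⟨m + 5, hkn⟩ : Fin n)).val + 1 = m + 4 := hh
          have : σ ⟨m + 5, hkn⟩ = σ ⟨m + 3, hk2⟩ := by
            rw [ih2]; exact Fin.ext (Nat.succ_injective hh2)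
          have := hinj this
          simp [Fin.ext_iff] at this
        · exact Fin.ext hh
  intro x
  have := main x.val x.isLt
  simpa using this
end

section
/- For every n ≥ 3, the complete graph K_n admits an edge-coloring with 3 colors that is asymmetric and, in addition, every vertex has at least one incident edge whose color is not the third color. -/
theorem stmt_9 (n : ℕ) (hn : 3 ≤ n) :
    ∃ φ : Sym2 (Fin n) → Fin 3,
      (∀ σ : (⊤ : SimpleGraph (Fin n)) ≃g (⊤ : SimpleGraph (Fin n)),
        (∀ u v : Fin n, u ≠ v → φ s(σ u, σ v) = φ s(u, v)) → ∀ x, σ x = x) ∧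
      (∀ v : Fin n, ∃ w : Fin n, w ≠ v ∧ φ s(v, w) ≠ 2) := by
  set f : Fin n → Fin n → Fin 3 := fun u v =>
    if u.val + 1 = v.val ∨ v.val + 1 = u.val then
      (if u.val = 0 ∨ v.val = 0 then 1 else 0) else 2 with hf
  have hsymm : ∀ u v, f u v = f v u := by
    intro u v
    simp only [hf]
    split_ifs <;> first | rfl | omega
  have hne2 : ∀ u v : Fin n, f u v ≠ 2 ↔ (u.val + 1 = v.val ∨ v.val + 1 = u.val) := by
    intro u v
    simp only [hf]
    split_ifs with h1 h2
    · exact iff_of_true (by decide) h1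
    · exact iff_of_true (by decide) h1
    · exact iff_of_false (by simp) (by assumption)
  have h1iff : ∀ u v : Fin n, f u v = 1 →
      (u.val = 0 ∧ v.val = 1) ∨ (u.val = 1 ∧ v.val = 0) := by
    intro u v h
    simp only [hf] at h
    split_ifs at h with h1 h2
    · omega
    · exact absurd h (by decide)
    · exact absurd h (by decide)
  have h0iff : ∀ u v : Fin n, f u v = 0 →
      (u.val + 1 = v.val ∨ v.val + 1 = u.val) ∧ u.val ≠ 0 ∧ v.val ≠ 0 := by
    intro u v h
    simp only [hf] at h
    split_ifs at h with h1 h2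
    · exact absurd h (by decide)
    · exact ⟨h1, by omega⟩
    · exact absurd h (by decide)
  refine ⟨Sym2.lift ⟨f, hsymm⟩, ?_, ?_⟩
  · intro σ H
    have key : ∀ u v : Fin n, u ≠ v → f (σ u) (σ v) = f u v := by
      intro u v huv
      have := H u v huv
      simpa using this
    have hinj : Function.Injective (⇑σ) := EquivLike.injective σ
    have hfix : ∀ k, ∀ hk : k < n, σ ⟨k, hk⟩ = ⟨k, hk⟩ := by
      have h0 : (0 : ℕ) < n := by omega
      have h1 : (1 : ℕ) < n := by omega
      have h2 : (2 : ℕ) < n := by omega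
      -- first pin down σ 0 and σ 1
      have hab : f (σ ⟨0, h0⟩) (σ ⟨1, h1⟩) = 1 := by
        rw [key _ _ (by simp [Fin.ext_iff])]
        simp [hf]
      have hcases := h1iff _ _ hab
      have hσ0 : σ ⟨0, h0⟩ = ⟨0, h0⟩ ∧ σ ⟨1, h1⟩ = ⟨1, h1⟩ := by
        rcases hcases with ⟨ha, hb⟩ | ⟨ha, hb⟩
        · exact ⟨Fin.ext ha, Fin.ext hb⟩
        · exfalso
          have h12 : f (σ ⟨1, h1⟩) (σ ⟨2, h2⟩) = 0 := by
            rw [key _ _ (by simp [Fin.ext_iff])]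
            simp only [hf]
            rw [if_pos (by left; simp), if_neg (by simp)]
          have := h0iff _ _ h12
          omega
      intro k
      induction k using Nat.strong_induction_on with
      | _ k ih =>
        intro hk
        match k, hk with
        | 0, hk => exact hσ0.1
        | 1, hk => exact hσ0.2
        | (m+2), hk =>
          have hm1 : σ ⟨m+1, by omega⟩ = ⟨m+1, by omega⟩ := ih (m+1) (by omega) (by omega)
          have hadj : f (σ ⟨m+1, by omega⟩) (σ ⟨m+2, hk⟩) ≠ 2 := by
            rw [key _ _ (by simp [Fin.ext_iff])]
            rw [hne2]
            left; rfl
          rw [hm1, hne2] at hadj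
          rcases hadj with h | h
          · exact Fin.ext h.symm
          · exfalso
            have hm : σ ⟨m, by omega⟩ = ⟨m, by omega⟩ := ih m (by omega) (by omega)
            have hEq : σ ⟨m+2, hk⟩ = σ ⟨m, by omega⟩ := by
              rw [hm]; exact Fin.ext (Nat.succ_injective h)
            have h2m : (m + 2 : ℕ) = m := congrArg Fin.val (hinj hEq)
            omega
    intro x
    have := hfix x.val x.isLt
    simpa using this
  · intro v
    by_cases hv : v.val = 0
    · refine ⟨⟨1, by omega⟩, ?_, ?_⟩
      · intro hcon
        have : (1 : ℕ) = v.val := congrArg Fin.val hcon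
        omega
      · simp only [Sym2.lift_mk]
        rw [hne2]
        exact Or.inl (show v.val + 1 = 1 by omega)
    · refine ⟨⟨v.val - 1, by omega⟩, ?_, ?_⟩
      · intro hcon
        have : v.val - 1 = v.val := congrArg Fin.val hcon
        omega
      · simp only [Sym2.lift_mk]
        rw [hne2]
        exact Or.inr (show v.val - 1 + 1 = v.val by omega)
end

section
/- The complete bipartite graph K_{2,4} does not admit an asymmetric edge-coloring with 2 colors. -/
theorem stmt_12 :
    ¬ ∃ φ : Sym2 (Fin 2 ⊕ Fin 4) → Fin 2,
      ∀ σ : completeBipartiteGraph (Fin 2) (Fin 4) ≃g completeBipartiteGraph (Fin 2) (Fin 4),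
        (∀ u v, (completeBipartiteGraph (Fin 2) (Fin 4)).Adj u v →
          φ s(σ u, σ v) = φ s(u, v)) → ∀ x, σ x = x := by
  rintro ⟨φ, h⟩
  set p : Fin 4 → Fin 2 × Fin 2 :=
    fun b => (φ s(Sum.inl 0, Sum.inr b), φ s(Sum.inl 1, Sum.inr b)) with hp
  by_cases hinj : Function.Injective p
  · -- all right vertices have distinct color pairs: swap the two left vertices
    have hbij : Function.Bijective p := (Fintype.bijective_iff_injective_and_card p).mpr ⟨hinj, by simp⟩
    let e := Equiv.ofBijective p hbij
    let τ : Fin 4 ≃ Fin 4 := e.trans ((Equiv.prodComm _ _).trans e.symm)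
    let σe : (Fin 2 ⊕ Fin 4) ≃ (Fin 2 ⊕ Fin 4) :=
      Equiv.sumCongr (Equiv.swap 0 1) τ
    have hadj : ∀ u v, (completeBipartiteGraph (Fin 2) (Fin 4)).Adj (σe u) (σe v) ↔
        (completeBipartiteGraph (Fin 2) (Fin 4)).Adj u v := by
      rintro (a|a) (b|b) <;>
        simp only [σe, Equiv.sumCongr_apply, Sum.map_inl, Sum.map_inr] <;> simp
    let σ : completeBipartiteGraph (Fin 2) (Fin 4) ≃g completeBipartiteGraph (Fin 2) (Fin 4) :=
      ⟨σe, hadj _ _⟩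
    have hpair : ∀ b : Fin 4,
        (φ s(Sum.inl 0, Sum.inr (τ b)), φ s(Sum.inl 1, Sum.inr (τ b)))
          = (φ s(Sum.inl 1, Sum.inr b), φ s(Sum.inl 0, Sum.inr b)) := by
      intro b
      have := e.apply_symm_apply ((Equiv.prodComm _ _) (e b))
      have h2 : ∀ b, e b = p b := fun _ => rfl
      rw [show τ b = e.symm ((Equiv.prodComm _ _) (e b)) from rfl] at *
      simpa [h2, hp, Prod.ext_iff] using this
    have key : ∀ (a : Fin 2) (b : Fin 4),
        φ s(Sum.inl (Equiv.swap (0:Fin 2) 1 a), Sum.inr (τ b)) = φ s(Sum.inl a, Sum.inr b) := by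
      intro a b
      have h1 := congrArg Prod.fst (hpair b)
      have h2 := congrArg Prod.snd (hpair b)
      simp only at h1 h2
      fin_cases a <;> simp_all
    have hcol : ∀ u v, (completeBipartiteGraph (Fin 2) (Fin 4)).Adj u v →
        φ s(σ u, σ v) = φ s(u, v) := by
      rintro (a|a) (b|b) hab
      · simp at hab
      · exact key a b
      · rw [show s(σ (Sum.inr a), σ (Sum.inl b)) = s(σ (Sum.inl b), σ (Sum.inr a)) from
          Sym2.eq_swap, show s(Sum.inr a, Sum.inl b) = s(Sum.inl b, Sum.inr a) from Sym2.eq_swap]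
        exact key b a
      · simp at hab
    have := h σ hcol (Sum.inl 0)
    simp [σ, σe] at this
  · -- two right vertices with the same color pair: swap them
    obtain ⟨i, j, hij, hne⟩ := Function.not_injective_iff.mp hinj
    have h0 := congrArg Prod.fst hij
    have h1 := congrArg Prod.snd hij
    simp only [hp] at h0 h1
    let σe : (Fin 2 ⊕ Fin 4) ≃ (Fin 2 ⊕ Fin 4) :=
      Equiv.sumCongr (Equiv.refl _) (Equiv.swap i j)
    have hadj : ∀ u v, (completeBipartiteGraph (Fin 2) (Fin 4)).Adj (σe u) (σe v) ↔
        (completeBipartiteGraph (Fin 2) (Fin 4)).Adj u v := by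
      rintro (a|a) (b|b) <;>
        simp only [σe, Equiv.sumCongr_apply, Sum.map_inl, Sum.map_inr] <;> simp
    let σ : completeBipartiteGraph (Fin 2) (Fin 4) ≃g completeBipartiteGraph (Fin 2) (Fin 4) :=
      ⟨σe, hadj _ _⟩
    have key : ∀ (a : Fin 2) (b : Fin 4),
        φ s(Sum.inl a, Sum.inr (Equiv.swap i j b)) = φ s(Sum.inl a, Sum.inr b) := by
      intro a b
      rcases eq_or_ne b i with rfl | hbi
      · rw [Equiv.swap_apply_left]; fin_cases a <;> simp_all
      rcases eq_or_ne b j with rfl | hbj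
      · rw [Equiv.swap_apply_right]; fin_cases a <;> simp_all
      · rw [Equiv.swap_apply_of_ne_of_ne hbi hbj]
    have hcol : ∀ u v, (completeBipartiteGraph (Fin 2) (Fin 4)).Adj u v →
        φ s(σ u, σ v) = φ s(u, v) := by
      rintro (a|a) (b|b) hab
      · simp at hab
      · exact key a b
      · rw [show s(σ (Sum.inr a), σ (Sum.inl b)) = s(σ (Sum.inl b), σ (Sum.inr a)) from
          Sym2.eq_swap, show s(Sum.inr a, Sum.inl b) = s(Sum.inl b, Sum.inr a) from Sym2.eq_swap]
        exact key b a
      · simp at hab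
    have := h σ hcol (Sum.inr i)
    simp [σ, σe, Equiv.swap_apply_left] at this
    exact hne this.symm
end
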